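/- Let k be a commutative ring and H a bialgebra over k with comultiplication Δ and counit ε. Let x be an invertible element of the algebra H ⊗_k H satisfying the cocycle condition (1 ⊗ x) · ((id_H ⊗ Δ)(x)) = (x ⊗ 1) · ((Δ ⊗ id_H)(x)) in H ⊗ H ⊗ H (after identifying the two bracketings by the associativity isomorphism), together with the normalization (ε ⊗ id)(x) = 1 and (id ⊗ ε)(x) = 1. Then H, with its original algebra structure, the twisted comultiplication Δ^x(h) = x · Δ(h) · x^{-1}, and the original counit ε, is again a bialgebra; in particular Δ^x is coassociative, counital with counit ε, and is an algebra homomorphism. -/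

import Mathlib

/-!
`Δˣ` is `Δ` followed by the inner automorphism `Ad x` of `H ⊗ H`, hence an algebra map.
Tensoring with `id` turns `Ad x` into `Ad (x ⊗ 1)` (resp. `Ad (1 ⊗ x)`), and pushing `Ad` past the
algebra map `Δ ⊗ id` gives `(Δˣ ⊗ id) ∘ Δˣ = Ad ((x ⊗ 1) · (Δ ⊗ id) x) ∘ (Δ ⊗ id) ∘ Δ`, and
symmetrically for `id ⊗ Δˣ`. The cocycle condition says that the associator carries the first
conjugating unit to the second, so coassociativity of `Δ` transfers to `Δˣ`. The normalization
says that `ε ⊗ id` and `id ⊗ ε` send `x` to `1`, so they absorb the conjugation.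
-/

open TensorProduct

noncomputable section

variable (k : Type u) (H : Type v) [CommRing k] [Ring H] [Bialgebra k H]

/-- The twisted comultiplication `Δˣ(h) = x · Δ(h) · x⁻¹`, as a `k`-linear map. -/
def twistedComul (x : (H ⊗[k] H)ˣ) : H →ₗ[k] H ⊗[k] H :=
  LinearMap.mulLeft k (x : H ⊗[k] H)
    ∘ₗ LinearMap.mulRight k ((x⁻¹ : (H ⊗[k] H)ˣ) : H ⊗[k] H)
    ∘ₗ Coalgebra.comul

section Conjugation

variable {R A B C : Type*} [CommSemiring R] [Semiring A] [Semiring B] [Semiring C]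
  [Algebra R A] [Algebra R B] [Algebra R C]

variable (R) in
def Units.conjAlgEquiv (u : Bˣ) : B ≃ₐ[R] B :=
  MulSemiringAction.toAlgEquiv R B (ConjAct.toConjAct u)

@[simp]
lemma Units.conjAlgEquiv_apply (u : Bˣ) (b : B) : u.conjAlgEquiv R b = u * b * ↑u⁻¹ :=
  ConjAct.units_smul_def _ _

lemma Units.conjAlgEquiv_mul (u v : Bˣ) :
    ((u * v).conjAlgEquiv R : B →ₐ[R] B)
      = (u.conjAlgEquiv R : B →ₐ[R] B).comp (v.conjAlgEquiv R) :=
  AlgHom.ext fun b => by simp [mul_assoc]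

lemma AlgHom.comp_conjAlgEquiv (φ : B →ₐ[R] C) (u : Bˣ) :
    φ.comp (u.conjAlgEquiv R) = ((Units.map φ.toMonoidHom u).conjAlgEquiv R : C →ₐ[R] C).comp φ :=
  AlgHom.ext fun b => by simp

lemma AlgHom.comp_conjAlgEquiv_of_map_eq_one (φ : B →ₐ[R] C) {u : Bˣ} (hu : φ u = 1) :
    φ.comp (u.conjAlgEquiv R) = φ := by
  have hu' : Units.map φ.toMonoidHom u = 1 := Units.ext hu
  rw [φ.comp_conjAlgEquiv, hu']
  ext b; simp

namespace Algebra.TensorProduct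

lemma rTensor_conjAlgEquiv_comp (f : A →ₐ[R] B) (u : Bˣ) :
    rTensor C ((u.conjAlgEquiv R : B →ₐ[R] B).comp f)
      = ((Units.map (includeLeft : B →ₐ[R] B ⊗[R] C).toMonoidHom u).conjAlgEquiv R
          : B ⊗[R] C →ₐ[R] B ⊗[R] C).comp (rTensor C f) := by
  ext <;> simp

lemma lTensor_conjAlgEquiv_comp (f : B →ₐ[R] C) (u : Cˣ) :
    lTensor A ((u.conjAlgEquiv R : C →ₐ[R] C).comp f)
      = ((Units.map (includeRight : C →ₐ[R] A ⊗[R] C).toMonoidHom u).conjAlgEquiv R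
          : A ⊗[R] C →ₐ[R] A ⊗[R] C).comp (lTensor A f) := by
  ext <;> simp

lemma toLinearMap_rTensor (f : A →ₐ[R] B) :
    (rTensor C f).toLinearMap = f.toLinearMap.rTensor C := rfl

lemma toLinearMap_lTensor (f : B →ₐ[R] C) :
    (lTensor A f).toLinearMap = f.toLinearMap.lTensor A := rfl

end Algebra.TensorProduct

end Conjugation

section Twist

variable {k H}
open Algebra.TensorProduct Bialgebra

def twistedComulAlgHom (x : (H ⊗[k] H)ˣ) : H →ₐ[k] H ⊗[k] H :=
  (x.conjAlgEquiv k : H ⊗[k] H →ₐ[k] H ⊗[k] H).comp (comulAlgHom k H)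

lemma toLinearMap_twistedComulAlgHom (x : (H ⊗[k] H)ˣ) :
    (twistedComulAlgHom x).toLinearMap = twistedComul k H x := by
  ext h; simp [twistedComulAlgHom, twistedComul, mul_assoc]

lemma rTensor_counit_comp_twistedComul (x : (H ⊗[k] H)ˣ)
    (hnorm : TensorProduct.lid k H
      (LinearMap.rTensor H (counitAlgHom k H).toLinearMap (x : H ⊗[k] H)) = 1) :
    (Coalgebra.counit (R := k) (A := H)).rTensor H ∘ₗ twistedComul k H x
      = TensorProduct.mk k k H 1 := by
  have hx : rTensor H (counitAlgHom k H) (x : H ⊗[k] H) = 1 :=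
    (Algebra.TensorProduct.lid k H).injective (by rw [map_one]; exact hnorm)
  rw [← Coalgebra.rTensor_counit_comp_comul, ← toLinearMap_twistedComulAlgHom, twistedComulAlgHom,
    ← toLinearMap_counitAlgHom, ← toLinearMap_comulAlgHom, ← toLinearMap_rTensor,
    ← AlgHom.comp_toLinearMap, ← AlgHom.comp_toLinearMap, ← AlgHom.comp_assoc,
    AlgHom.comp_conjAlgEquiv_of_map_eq_one _ hx]

lemma lTensor_counit_comp_twistedComul (x : (H ⊗[k] H)ˣ)
    (hnorm : TensorProduct.rid k H
      (LinearMap.lTensor H (counitAlgHom k H).toLinearMap (x : H ⊗[k] H)) = 1) :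
    (Coalgebra.counit (R := k) (A := H)).lTensor H ∘ₗ twistedComul k H x
      = (TensorProduct.mk k H k).flip 1 := by
  have hx : lTensor H (counitAlgHom k H) (x : H ⊗[k] H) = 1 :=
    (Algebra.TensorProduct.rid k k H).injective (by rw [map_one]; exact hnorm)
  rw [← Coalgebra.lTensor_counit_comp_comul, ← toLinearMap_twistedComulAlgHom, twistedComulAlgHom,
    ← toLinearMap_counitAlgHom, ← toLinearMap_comulAlgHom, ← toLinearMap_lTensor,
    ← AlgHom.comp_toLinearMap, ← AlgHom.comp_toLinearMap, ← AlgHom.comp_assoc,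
    AlgHom.comp_conjAlgEquiv_of_map_eq_one _ hx]

lemma Bialgebra.assoc_comp_rTensor_comulAlgHom_comp_comulAlgHom :
    (Algebra.TensorProduct.assoc k k k H H H).toAlgHom.comp
        ((rTensor H (comulAlgHom k H)).comp (comulAlgHom k H))
      = (lTensor H (comulAlgHom k H)).comp (comulAlgHom k H) :=
  AlgHom.toLinearMap_injective Coalgebra.coassoc

-- The two sides `(x ⊗ 1) · (Δ ⊗ id) x` and `(1 ⊗ x) · (id ⊗ Δ) x` of the cocycle condition.
def cocycleLeftUnit (x : (H ⊗[k] H)ˣ) : ((H ⊗[k] H) ⊗[k] H)ˣ :=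
  Units.map (includeLeft : H ⊗[k] H →ₐ[k] (H ⊗[k] H) ⊗[k] H).toMonoidHom x
    * Units.map (rTensor H (comulAlgHom k H) : H ⊗[k] H →ₐ[k] (H ⊗[k] H) ⊗[k] H).toMonoidHom x

def cocycleRightUnit (x : (H ⊗[k] H)ˣ) : (H ⊗[k] (H ⊗[k] H))ˣ :=
  Units.map (includeRight : H ⊗[k] H →ₐ[k] H ⊗[k] (H ⊗[k] H)).toMonoidHom x
    * Units.map (lTensor H (comulAlgHom k H) : H ⊗[k] H →ₐ[k] H ⊗[k] (H ⊗[k] H)).toMonoidHom x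

lemma map_assoc_cocycleLeftUnit (x : (H ⊗[k] H)ˣ)
    (hcocycle : ((1 : H) ⊗ₜ[k] (x : H ⊗[k] H)) * map (AlgHom.id k H) (comulAlgHom k H) x
      = Algebra.TensorProduct.assoc k k k H H H
          (((x : H ⊗[k] H) ⊗ₜ[k] (1 : H)) * map (comulAlgHom k H) (AlgHom.id k H) x)) :
    Units.map (Algebra.TensorProduct.assoc k k k H H H).toAlgHom.toMonoidHom (cocycleLeftUnit x)
      = cocycleRightUnit x :=
  Units.ext hcocycle.symm

lemma rTensor_twistedComulAlgHom_comp_twistedComulAlgHom (x : (H ⊗[k] H)ˣ) :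
    (rTensor H (twistedComulAlgHom x)).comp (twistedComulAlgHom x)
      = ((cocycleLeftUnit x).conjAlgEquiv k : (H ⊗[k] H) ⊗[k] H →ₐ[k] (H ⊗[k] H) ⊗[k] H).comp
          ((rTensor H (comulAlgHom k H)).comp (comulAlgHom k H)) := by
  rw [twistedComulAlgHom, rTensor_conjAlgEquiv_comp, AlgHom.comp_assoc,
    ← AlgHom.comp_assoc _ _ (comulAlgHom k H), AlgHom.comp_conjAlgEquiv, cocycleLeftUnit,
    Units.conjAlgEquiv_mul]
  simp only [AlgHom.comp_assoc]

lemma lTensor_twistedComulAlgHom_comp_twistedComulAlgHom (x : (H ⊗[k] H)ˣ) :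
    (lTensor H (twistedComulAlgHom x)).comp (twistedComulAlgHom x)
      = ((cocycleRightUnit x).conjAlgEquiv k : H ⊗[k] (H ⊗[k] H) →ₐ[k] H ⊗[k] (H ⊗[k] H)).comp
          ((lTensor H (comulAlgHom k H)).comp (comulAlgHom k H)) := by
  rw [twistedComulAlgHom, lTensor_conjAlgEquiv_comp, AlgHom.comp_assoc,
    ← AlgHom.comp_assoc _ _ (comulAlgHom k H), AlgHom.comp_conjAlgEquiv, cocycleRightUnit,
    Units.conjAlgEquiv_mul]
  simp only [AlgHom.comp_assoc]

lemma coassoc_twistedComul (x : (H ⊗[k] H)ˣ)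
    (hcocycle : ((1 : H) ⊗ₜ[k] (x : H ⊗[k] H)) * map (AlgHom.id k H) (comulAlgHom k H) x
      = Algebra.TensorProduct.assoc k k k H H H
          (((x : H ⊗[k] H) ⊗ₜ[k] (1 : H)) * map (comulAlgHom k H) (AlgHom.id k H) x)) :
    TensorProduct.assoc k H H H ∘ₗ (twistedComul k H x).rTensor H ∘ₗ twistedComul k H x
      = (twistedComul k H x).lTensor H ∘ₗ twistedComul k H x := by
  have key : (Algebra.TensorProduct.assoc k k k H H H).toAlgHom.comp
        ((rTensor H (twistedComulAlgHom x)).comp (twistedComulAlgHom x))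
      = (lTensor H (twistedComulAlgHom x)).comp (twistedComulAlgHom x) := by
    rw [rTensor_twistedComulAlgHom_comp_twistedComulAlgHom,
      lTensor_twistedComulAlgHom_comp_twistedComulAlgHom, ← AlgHom.comp_assoc,
      AlgHom.comp_conjAlgEquiv, map_assoc_cocycleLeftUnit x hcocycle, AlgHom.comp_assoc,
      Bialgebra.assoc_comp_rTensor_comulAlgHom_comp_comulAlgHom]
  rw [← toLinearMap_twistedComulAlgHom, ← toLinearMap_rTensor, ← toLinearMap_lTensor]
  exact congr(($key).toLinearMap)

end Twist

/-- twisting the comultiplication of a bialgebra by an invertible normalized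
2-cocycle `x ∈ (H ⊗ H)ˣ` again yields a bialgebra `(H, Δˣ, ε)` with the original algebra
structure: `Δˣ` is coassociative, counital with counit `ε`, and an algebra homomorphism. -/
theorem bialgebra_twist_by_two_cocycle
    (x : (H ⊗[k] H)ˣ)
    (hcocycle :
      ((1 : H) ⊗ₜ[k] (x : H ⊗[k] H))
          * (Algebra.TensorProduct.map (AlgHom.id k H) (Bialgebra.comulAlgHom k H)
              (x : H ⊗[k] H))
        = (Algebra.TensorProduct.assoc k k k H H H)
            (((x : H ⊗[k] H) ⊗ₜ[k] (1 : H))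
              * (Algebra.TensorProduct.map (Bialgebra.comulAlgHom k H) (AlgHom.id k H)
                  (x : H ⊗[k] H))))
    (hnorm₁ :
      (TensorProduct.lid k H)
        (LinearMap.rTensor H (Bialgebra.counitAlgHom k H).toLinearMap (x : H ⊗[k] H)) = 1)
    (hnorm₂ :
      (TensorProduct.rid k H)
        (LinearMap.lTensor H (Bialgebra.counitAlgHom k H).toLinearMap (x : H ⊗[k] H)) = 1) :
    -- `Δˣ` is coassociative
    (TensorProduct.assoc k H H H ∘ₗ (twistedComul k H x).rTensor H ∘ₗ twistedComul k H x
        = (twistedComul k H x).lTensor H ∘ₗ twistedComul k H x) ∧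
    -- `Δˣ` is counital with counit the original `ε`
    ((Coalgebra.counit (R := k) (A := H)).rTensor H ∘ₗ twistedComul k H x
        = TensorProduct.mk k k H 1) ∧
    ((Coalgebra.counit (R := k) (A := H)).lTensor H ∘ₗ twistedComul k H x
        = (TensorProduct.mk k H k).flip 1) ∧
    -- `Δˣ` is a homomorphism of `k`-algebras
    (∃ f : H →ₐ[k] H ⊗[k] H, ⇑f = ⇑(twistedComul k H x)) :=
  ⟨coassoc_twistedComul x hcocycle, rTensor_counit_comp_twistedComul x hnorm₁,
    lTensor_counit_comp_twistedComul x hnorm₂,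
    twistedComulAlgHom x, congrArg DFunLike.coe (toLinearMap_twistedComulAlgHom x)⟩

end
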